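/- arXiv:2601.22682 — 3 statements merged into one kernel-verified Lean document; each statement's English description precedes it below -/
import Mathlib

section
/- Let G : ℝ^{d_x} × ℝ^{d_y} → ℝ be L₂-smooth with L₂ > 0, let γ ∈ (0, 1/(2L₂)), and let ρ_{v1} ≥ L₂ and ρ_{v2} ≥ 1/γ. Then for all (x,y) and (x̄,ȳ) in ℝ^{d_x} × ℝ^{d_y}: −V_γ(x,y) ≤ −V_γ(x̄,ȳ) − ⟨∇V_γ(x̄,ȳ), (x,y) − (x̄,ȳ)⟩ + (ρ_{v1}/2)‖x − x̄‖² + (ρ_{v2}/2)‖y − ȳ‖². -/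
open scoped RealInnerProductSpace

noncomputable section

/-- `Euc d` is the Euclidean space `ℝ^d`. -/
abbrev Euc (d : ℕ) : Type := EuclideanSpace ℝ (Fin d)

/-- Gradient of `h` with respect to the first block of variables. -/
noncomputable def gradx {dx dy : ℕ} (h : Euc dx → Euc dy → ℝ) (x : Euc dx) (y : Euc dy) :
    Euc dx :=
  gradient (fun x' => h x' y) x

/-- Gradient of `h` with respect to the second block of variables. -/
noncomputable def grady {dx dy : ℕ} (h : Euc dx → Euc dy → ℝ) (x : Euc dx) (y : Euc dy) :
    Euc dy :=
  gradient (fun y' => h x y') y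

/-- The ℓ²-norm of a pair of vectors (the norm on the product `ℝ^{d_x} × ℝ^{d_y}`). -/
noncomputable def pnorm {dx dy : ℕ} (a : Euc dx) (b : Euc dy) : ℝ :=
  Real.sqrt (‖a‖ ^ 2 + ‖b‖ ^ 2)

/-- `h : ℝ^{d_x} × ℝ^{d_y} → ℝ` is `L`-smooth: it is differentiable and its gradient is
`L`-Lipschitz with respect to the ℓ² product norm. -/
def LSmooth {dx dy : ℕ} (L : ℝ) (h : Euc dx → Euc dy → ℝ) : Prop :=
  (∀ y, Differentiable ℝ fun x => h x y) ∧ (∀ x, Differentiable ℝ fun y => h x y) ∧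
    ∀ x y x' y',
      pnorm (gradx h x y - gradx h x' y') (grady h x y - grady h x' y') ≤
        L * pnorm (x - x') (y - y')

/-- The Moreau envelope `V_γ` of `G`. -/
noncomputable def moreau {dx dy : ℕ} (G : Euc dx → Euc dy → ℝ) (γ : ℝ)
    (x : Euc dx) (y : Euc dy) : ℝ :=
  ⨅ θ : Euc dy, (G x θ + ‖θ - y‖ ^ 2 / (2 * γ))

lemma hasDerivAt_line {d : ℕ} (f : Euc d → ℝ) (hf : Differentiable ℝ f) (a v : Euc d) (t : ℝ) :
    HasDerivAt (fun s : ℝ => f (a + s • v)) ⟪gradient f (a + t • v), v⟫ t := by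
  have h1 : HasDerivAt (fun s : ℝ => a + s • v) v t := by
    simpa using ((hasDerivAt_id t).smul_const v).const_add a
  have h2 := (hf (a + t • v)).hasGradientAt.hasFDerivAt
  have h3 := h2.comp_hasDerivAt t h1
  simpa [InnerProductSpace.toDual_apply_apply, Function.comp_def] using h3

lemma descent {d : ℕ} (f : Euc d → ℝ) (L : ℝ) (hf : Differentiable ℝ f)
    (hL : ∀ a b, ‖gradient f a - gradient f b‖ ≤ L * ‖a - b‖) (a v : Euc d) :
    f a + ⟪gradient f a, v⟫ - L / 2 * ‖v‖ ^ 2 ≤ f (a + v) := by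
  rcases eq_or_ne v 0 with rfl | hv
  · simp
  have hL0 : 0 ≤ L := by
    have := hL a (a + v)
    have h2 : (0:ℝ) ≤ ‖gradient f a - gradient f (a + v)‖ := norm_nonneg _
    have h3 : ‖a - (a + v)‖ = ‖v‖ := by simp
    nlinarith [norm_pos_iff.mpr hv, this]
  set g : ℝ → ℝ := fun t => f (a + t • v) - t * ⟪gradient f a, v⟫ + L / 2 * ‖v‖ ^ 2 * t ^ 2 with hg
  have hd : ∀ t : ℝ, HasDerivAt g
      (⟪gradient f (a + t • v), v⟫ - ⟪gradient f a, v⟫ + L * ‖v‖ ^ 2 * t) t := by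
    intro t
    have h1 := hasDerivAt_line f hf a v t
    have h2 : HasDerivAt (fun s : ℝ => s * ⟪gradient f a, v⟫) ⟪gradient f a, v⟫ t := by
      simpa using (hasDerivAt_id t).mul_const ⟪gradient f a, v⟫
    have h3 : HasDerivAt (fun s : ℝ => L / 2 * ‖v‖ ^ 2 * s ^ 2) (L / 2 * ‖v‖ ^ 2 * (2 * t)) t := by
      simpa using ((hasDerivAt_pow 2 t).const_mul (L / 2 * ‖v‖ ^ 2))
    have := (h1.sub h2).add h3
    refine this.congr_deriv ?_
    ring
  have hmono : MonotoneOn g (Set.Icc (0:ℝ) 1) := by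
    apply monotoneOn_of_deriv_nonneg (convex_Icc 0 1)
    · exact fun t _ => (hd t).differentiableAt.continuousAt.continuousWithinAt
    · exact fun t _ => ((hd t).differentiableAt).differentiableWithinAt
    · intro t ht
      rw [(hd t).deriv]
      simp only [interior_Icc, Set.mem_Ioo] at ht
      have hlip := hL (a + t • v) a
      have h4 : ‖a + t • v - a‖ = t * ‖v‖ := by
        rw [add_sub_cancel_left, norm_smul]
        simp [abs_of_pos ht.1]
      have h5 : ⟪gradient f (a + t • v) - gradient f a, v⟫ ≥
          -(‖gradient f (a + t • v) - gradient f a‖ * ‖v‖) := by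
        have := abs_real_inner_le_norm (gradient f (a + t • v) - gradient f a) v
        linarith [neg_abs_le ⟪gradient f (a + t • v) - gradient f a, v⟫]
      rw [inner_sub_left] at h5
      have h6 : ‖gradient f (a + t • v) - gradient f a‖ * ‖v‖ ≤ L * (t * ‖v‖) * ‖v‖ := by
        apply mul_le_mul_of_nonneg_right _ (norm_nonneg v)
        rw [← h4]; exact hlip
      nlinarith [ht.1.le]
  have := hmono (Set.mem_Icc.mpr ⟨le_refl 0, zero_le_one⟩) (Set.mem_Icc.mpr ⟨zero_le_one, le_refl 1⟩) zero_le_one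
  simp only [hg, zero_smul, add_zero, one_smul, zero_mul, one_mul, zero_pow, mul_zero, one_pow, mul_one, sub_zero] at this
  linarith

lemma pnorm_nonneg {dx dy : ℕ} (a : Euc dx) (b : Euc dy) : 0 ≤ pnorm a b := Real.sqrt_nonneg _

lemma pnorm_zero_left {dx dy : ℕ} (b : Euc dy) : pnorm (0 : Euc dx) b = ‖b‖ := by
  simp [pnorm, Real.sqrt_sq (norm_nonneg b)]

lemma pnorm_smul {dx dy : ℕ} (t : ℝ) (a : Euc dx) (b : Euc dy) :
    pnorm (t • a) (t • b) = |t| * pnorm a b := by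
  simp only [pnorm, norm_smul, Real.norm_eq_abs, mul_pow, ← mul_add]
  rw [Real.sqrt_mul (sq_nonneg |t|), Real.sqrt_sq (abs_nonneg t)]

lemma norm_left_le_pnorm {dx dy : ℕ} (a : Euc dx) (b : Euc dy) : ‖a‖ ≤ pnorm a b :=
  calc ‖a‖ = Real.sqrt (‖a‖ ^ 2) := (Real.sqrt_sq (norm_nonneg a)).symm
    _ ≤ pnorm a b := Real.sqrt_le_sqrt (by nlinarith [sq_nonneg ‖b‖])

lemma norm_right_le_pnorm {dx dy : ℕ} (a : Euc dx) (b : Euc dy) : ‖b‖ ≤ pnorm a b :=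
  calc ‖b‖ = Real.sqrt (‖b‖ ^ 2) := (Real.sqrt_sq (norm_nonneg b)).symm
    _ ≤ pnorm a b := Real.sqrt_le_sqrt (by nlinarith [sq_nonneg ‖a‖])

lemma pnorm_sq {dx dy : ℕ} (a : Euc dx) (b : Euc dy) : pnorm a b ^ 2 = ‖a‖^2 + ‖b‖^2 := by
  rw [pnorm, Real.sq_sqrt (by positivity)]

lemma pair_inner_ge {dx dy : ℕ} (A p : Euc dx) (B u : Euc dy) :
    -(pnorm A B * pnorm p u) ≤ ⟪A, p⟫ + ⟪B, u⟫ := by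
  have h1 : -(‖A‖ * ‖p‖) ≤ ⟪A, p⟫ := by
    have := abs_real_inner_le_norm A p; linarith [neg_abs_le ⟪A, p⟫]
  have h2 : -(‖B‖ * ‖u‖) ≤ ⟪B, u⟫ := by
    have := abs_real_inner_le_norm B u; linarith [neg_abs_le ⟪B, u⟫]
  have hsq : (‖A‖ * ‖p‖ + ‖B‖ * ‖u‖) ^ 2 ≤ (pnorm A B * pnorm p u) ^ 2 := by
    rw [mul_pow, pnorm_sq, pnorm_sq]
    nlinarith [sq_nonneg (‖A‖ * ‖u‖ - ‖B‖ * ‖p‖)]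
  have h3 : ‖A‖ * ‖p‖ + ‖B‖ * ‖u‖ ≤ pnorm A B * pnorm p u :=
    le_of_pow_le_pow_left₀ two_ne_zero
      (mul_nonneg (pnorm_nonneg A B) (pnorm_nonneg p u)) hsq
  linarith

variable {dx dy : ℕ}

lemma gradx_lip {L₂ : ℝ} {G : Euc dx → Euc dy → ℝ} (hG : LSmooth L₂ G) (θ : Euc dy)
    (a b : Euc dx) : ‖gradient (fun x' => G x' θ) a - gradient (fun x' => G x' θ) b‖ ≤ L₂ * ‖a - b‖ := by
  have h := hG.2.2 a θ b θ
  have h1 : ‖gradx G a θ - gradx G b θ‖ ≤ pnorm (gradx G a θ - gradx G b θ) (grady G a θ - grady G b θ) :=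
    norm_left_le_pnorm _ _
  have h2 : pnorm (a - b) (θ - θ) = ‖a - b‖ := by
    rw [sub_self]
    calc pnorm (a-b) (0 : Euc dy) = Real.sqrt (‖a-b‖^2 + ‖(0:Euc dy)‖^2) := rfl
      _ = ‖a - b‖ := by simp [Real.sqrt_sq (norm_nonneg _)]
  rw [h2] at h
  exact le_trans h1 h

lemma grady_lip {L₂ : ℝ} {G : Euc dx → Euc dy → ℝ} (hG : LSmooth L₂ G) (x : Euc dx)
    (a b : Euc dy) : ‖gradient (fun y' => G x y') a - gradient (fun y' => G x y') b‖ ≤ L₂ * ‖a - b‖ := by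
  have h := hG.2.2 x a x b
  have h1 : ‖grady G x a - grady G x b‖ ≤ pnorm (gradx G x a - gradx G x b) (grady G x a - grady G x b) :=
    norm_right_le_pnorm _ _
  have h2 : pnorm (x - x) (a - b) = ‖a - b‖ := by rw [sub_self]; exact pnorm_zero_left _
  rw [h2] at h
  exact le_trans h1 h

/-- one step of the telescoping bound -/
lemma step {L₂ : ℝ} {G : Euc dx → Euc dy → ℝ} (hG : LSmooth L₂ G) (hL₂ : 0 ≤ L₂)
    (xb : Euc dx) (θb : Euc dy) (p : Euc dx) (u : Euc dy) (t h : ℝ) (ht : 0 ≤ t) (hh : 0 ≤ h) :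
    h * (⟪gradx G xb θb, p⟫ + ⟪grady G xb θb, u⟫)
      - L₂ * (‖p‖^2 + ‖u‖^2) * t * h - (3/2) * L₂ * (‖p‖^2 + ‖u‖^2) * h^2 ≤
    G (xb + (t+h) • p) (θb + (t+h) • u) - G (xb + t • p) (θb + t • u) := by
  set K := ‖p‖^2 + ‖u‖^2 with hK
  set xt := xb + t • p
  set θt := θb + t • u
  set θ' := θb + (t+h) • u
  have hx' : xb + (t+h) • p = xt + h • p := by rw [add_smul, ← add_assoc]
  have hθ' : θ' = θt + h • u := by rw [show θ' = θb + (t+h) • u from rfl, add_smul, ← add_assoc]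
  -- descent in x block at fixed θ'
  have hA := descent (fun x' => G x' θ') L₂ (hG.1 θ') (gradx_lip hG θ') xt (h • p)
  -- descent in y block at fixed xt
  have hB := descent (fun y' => G xt y') L₂ (hG.2.1 xt) (grady_lip hG xt) θt (h • u)
  rw [← hθ'] at hB
  rw [← hx'] at hA
  -- rewrite inner products with smul
  rw [real_inner_smul_right] at hA hB
  have hnp : ‖h • p‖^2 = h^2 * ‖p‖^2 := by rw [norm_smul]; simp [mul_pow, abs_of_nonneg hh]
  have hnu : ‖h • u‖^2 = h^2 * ‖u‖^2 := by rw [norm_smul]; simp [mul_pow, abs_of_nonneg hh]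
  -- gradient error bounds
  have hc1 : -(L₂ * t * K) ≤ ⟪gradx G xt θt - gradx G xb θb, p⟫ + ⟪grady G xt θt - grady G xb θb, u⟫ := by
    have hcs := pair_inner_ge (gradx G xt θt - gradx G xb θb) p (grady G xt θt - grady G xb θb) u
    have hl := hG.2.2 xt θt xb θb
    have hd : pnorm (xt - xb) (θt - θb) = t * pnorm p u := by
      have : xt - xb = t • p := by simp [xt]
      have h2 : θt - θb = t • u := by simp [θt]
      rw [this, h2, pnorm_smul, abs_of_nonneg ht]
    rw [hd] at hl
    have hK2 : pnorm p u ^ 2 = K := pnorm_sq p u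
    have hmul : pnorm (gradx G xt θt - gradx G xb θb) (grady G xt θt - grady G xb θb) * pnorm p u
        ≤ L₂ * (t * pnorm p u) * pnorm p u := mul_le_mul_of_nonneg_right hl (pnorm_nonneg _ _)
    have heq : L₂ * (t * pnorm p u) * pnorm p u = L₂ * t * K := by rw [← hK2]; ring
    linarith [hcs, hmul]
  have hc2 : -(L₂ * h * K) ≤ ⟪gradx G xt θ' - gradx G xt θt, p⟫ := by
    have habs := abs_real_inner_le_norm (gradx G xt θ' - gradx G xt θt) p
    have hl := hG.2.2 xt θ' xt θt
    have hd : pnorm (xt - xt) (θ' - θt) = h * ‖u‖ := by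
      have h2 : θ' - θt = h • u := by
        rw [hθ']; abel
      rw [sub_self, h2, pnorm_zero_left, norm_smul]
      simp [abs_of_nonneg hh]
    rw [hd] at hl
    have h1 : ‖gradx G xt θ' - gradx G xt θt‖ ≤ L₂ * (h * ‖u‖) :=
      le_trans (norm_left_le_pnorm _ _) hl
    have h5 : -(‖gradx G xt θ' - gradx G xt θt‖ * ‖p‖) ≤ ⟪gradx G xt θ' - gradx G xt θt, p⟫ := by
      linarith [neg_abs_le ⟪gradx G xt θ' - gradx G xt θt, p⟫]
    have h6 : ‖gradx G xt θ' - gradx G xt θt‖ * ‖p‖ ≤ L₂ * (h * ‖u‖) * ‖p‖ :=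
      mul_le_mul_of_nonneg_right h1 (norm_nonneg p)
    have h7 : ‖u‖ * ‖p‖ ≤ K := by nlinarith [sq_nonneg (‖u‖ - ‖p‖)]
    have h8 : L₂ * h * (‖u‖ * ‖p‖) ≤ L₂ * h * K :=
      mul_le_mul_of_nonneg_left h7 (mul_nonneg hL₂ hh)
    have h9 : L₂ * (h * ‖u‖) * ‖p‖ = L₂ * h * (‖u‖ * ‖p‖) := by ring
    linarith
  rw [inner_sub_left, inner_sub_left] at hc1
  rw [inner_sub_left] at hc2
  have e1 : gradient (fun x' => G x' θ') xt = gradx G xt θ' := rfl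
  have e2 : gradient (fun y' => G xt y') θt = grady G xt θt := rfl
  rw [e1] at hA
  rw [e2] at hB
  rw [hnp] at hA
  rw [hnu] at hB
  have hsum : (⟪gradx G xb θb, p⟫ + ⟪grady G xb θb, u⟫) - L₂*t*K - L₂*h*K ≤
      ⟪gradx G xt θ', p⟫ + ⟪grady G xt θt, u⟫ := by linarith
  have hprod := mul_le_mul_of_nonneg_left hsum hh
  have hx1 : h * (⟪gradx G xb θb, p⟫ + ⟪grady G xb θb, u⟫ - L₂*t*K - L₂*h*K) =
      h * (⟪gradx G xb θb, p⟫ + ⟪grady G xb θb, u⟫) - L₂*K*t*h - L₂*K*h^2 := by ring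
  have hx2 : h * (⟪gradx G xt θ', p⟫ + ⟪grady G xt θt, u⟫) =
      h * ⟪gradx G xt θ', p⟫ + h * ⟪grady G xt θt, u⟫ := by ring
  rw [hx1, hx2] at hprod
  have hx3 : L₂ / 2 * (h ^ 2 * ‖p‖ ^ 2) + L₂ / 2 * (h ^ 2 * ‖u‖ ^ 2) = L₂ / 2 * K * h^2 := by
    rw [hK]; ring
  clear_value K
  linarith [hA, hB, hprod, hx3]

set_option maxHeartbeats 2000000 in
lemma joint_descent {L₂ : ℝ} {G : Euc dx → Euc dy → ℝ} (hG : LSmooth L₂ G) (hL₂ : 0 ≤ L₂)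
    (xb x : Euc dx) (θb θ : Euc dy) :
    G xb θb + ⟪gradx G xb θb, x - xb⟫ + ⟪grady G xb θb, θ - θb⟫
      - L₂ / 2 * (‖x - xb‖ ^ 2 + ‖θ - θb‖ ^ 2) ≤ G x θ := by
  set p := x - xb with hp
  set u := θ - θb with hu
  set K := ‖p‖ ^ 2 + ‖u‖ ^ 2 with hK
  set S := ⟪gradx G xb θb, p⟫ + ⟪grady G xb θb, u⟫ with hS
  have hKnn : 0 ≤ K := by rw [hK]; positivity
  clear_value p u K S
  have key : ∀ n : ℕ, 1 ≤ n → G xb θb + S - L₂ / 2 * K - 2 * L₂ * K / n ≤ G x θ := by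
    intro n hn
    have hn' : (0:ℝ) < n := by exact_mod_cast Nat.pos_of_ne_zero (by omega)
    set f : ℕ → ℝ := fun i => G (xb + ((i:ℝ)/n) • p) (θb + ((i:ℝ)/n) • u) with hf
    have htel : ∑ i ∈ Finset.range n, (f (i+1) - f i) = f n - f 0 := Finset.sum_range_sub f n
    have hstep : ∀ i ∈ Finset.range n,
        (1/(n:ℝ)) * S - (L₂*K/(n:ℝ)^2) * (i:ℝ) - (3/2)*L₂*K/(n:ℝ)^2 ≤ f (i+1) - f i := by
      intro i _
      have hst := step hG hL₂ xb θb p u ((i:ℝ)/n) (1/n)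
        (div_nonneg (Nat.cast_nonneg i) hn'.le) (by positivity)
      have hc : ((i:ℝ)+1)/n = (i:ℝ)/n + 1/n := by ring
      have hfi : f (i+1) = G (xb + ((i:ℝ)/n + 1/n) • p) (θb + ((i:ℝ)/n + 1/n) • u) := by
        simp only [hf]
        push_cast
        rw [hc]
      rw [hfi]
      simp only [hf]
      have e1 : L₂ * K * ((i:ℝ)/n) * (1/n) = (L₂*K/(n:ℝ)^2) * (i:ℝ) := by ring
      have e2 : (3/2) * L₂ * K * (1/(n:ℝ))^2 = (3/2)*L₂*K/(n:ℝ)^2 := by ring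
      rw [← hK, ← hS] at hst
      linarith [hst, e1.le, e1.ge, e2.le, e2.ge]
    have hsum := Finset.sum_le_sum hstep
    rw [htel] at hsum
    have hf0 : f 0 = G xb θb := by simp [hf]
    have hfn : f n = G x θ := by
      simp only [hf, div_self hn'.ne', one_smul, hp, hu]
      rw [add_sub_cancel, add_sub_cancel]
    have hgauss : (∑ i ∈ Finset.range n, (i:ℝ)) * 2 = (n:ℝ) * ((n:ℝ) - 1) := by
      have := congrArg (Nat.cast (R := ℝ)) (Finset.sum_range_id_mul_two n)
      push_cast [Nat.cast_sub hn] at this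
      convert this using 2 <;> push_cast <;> ring
    have hsum2 : ∑ i ∈ Finset.range n,
        ((1/(n:ℝ)) * S - (L₂*K/(n:ℝ)^2) * (i:ℝ) - (3/2)*L₂*K/(n:ℝ)^2) =
        (n:ℝ) * ((1/(n:ℝ))*S) - (L₂*K/(n:ℝ)^2) * (∑ i ∈ Finset.range n, (i:ℝ))
          - (n:ℝ) * ((3/2)*L₂*K/(n:ℝ)^2) := by
      have t1 : ∑ i ∈ Finset.range n,
          ((1/(n:ℝ)) * S - (L₂*K/(n:ℝ)^2) * (i:ℝ) - (3/2)*L₂*K/(n:ℝ)^2) =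
          (∑ _i ∈ Finset.range n, (1/(n:ℝ)) * S)
            - (∑ i ∈ Finset.range n, (L₂*K/(n:ℝ)^2) * (i:ℝ))
            - (∑ _i ∈ Finset.range n, (3/2)*L₂*K/(n:ℝ)^2) := by
        rw [Finset.sum_sub_distrib, Finset.sum_sub_distrib]
      have t2 : (∑ _i ∈ Finset.range n, (1/(n:ℝ)) * S) = (n:ℝ) * ((1/(n:ℝ))*S) := by
        rw [Finset.sum_const, Finset.card_range, nsmul_eq_mul]
      have t3 : (∑ i ∈ Finset.range n, (L₂*K/(n:ℝ)^2) * (i:ℝ)) =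
          (L₂*K/(n:ℝ)^2) * (∑ i ∈ Finset.range n, (i:ℝ)) := by
        rw [Finset.mul_sum]
      have t4 : (∑ _i ∈ Finset.range n, (3/2)*L₂*K/(n:ℝ)^2) =
          (n:ℝ) * ((3/2)*L₂*K/(n:ℝ)^2) := by
        rw [Finset.sum_const, Finset.card_range, nsmul_eq_mul]
      rw [t1, t2, t3, t4]
    rw [hsum2, hf0, hfn] at hsum
    have e3 : (n:ℝ) * ((1/(n:ℝ))*S) = S := by field_simp
    have e4 : (L₂*K/(n:ℝ)^2) * (∑ i ∈ Finset.range n, (i:ℝ)) ≤ L₂*K/2 := by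
      have hs : (∑ i ∈ Finset.range n, (i:ℝ)) = (n:ℝ) * ((n:ℝ) - 1) / 2 := by linarith [hgauss]
      rw [hs]
      rw [div_mul_eq_mul_div, div_le_div_iff₀ (by positivity) (by norm_num)]
      have h1 : (n:ℝ) * ((n:ℝ) - 1) ≤ (n:ℝ)^2 := by nlinarith [hn'.le]
      have h2 := mul_le_mul_of_nonneg_left h1 (mul_nonneg hL₂ hKnn)
      nlinarith [h2]
    have e5 : (n:ℝ) * ((3/2)*L₂*K/(n:ℝ)^2) ≤ 2*L₂*K/(n:ℝ) := by
      have e5a : (n:ℝ) * ((3/2)*L₂*K/(n:ℝ)^2) = 3/2*L₂*K/(n:ℝ) := by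
        field_simp
      rw [e5a]
      have hnum : 3/2*L₂*K ≤ 2*L₂*K := by nlinarith [mul_nonneg hL₂ hKnn]
      have := mul_le_mul_of_nonneg_right hnum (by positivity : (0:ℝ) ≤ ((n:ℝ))⁻¹)
      simpa [div_eq_mul_inv] using this
    linarith [hsum, e3.le, e3.ge, e4, e5]
  have h0 : Filter.Tendsto (fun n : ℕ => 2*L₂*K/(n:ℝ)) Filter.atTop (nhds 0) :=
    Filter.Tendsto.div_atTop tendsto_const_nhds tendsto_natCast_atTop_atTop
  have hlim : Filter.Tendsto (fun n : ℕ => G xb θb + S - L₂/2*K - 2*L₂*K/(n:ℝ))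
      Filter.atTop (nhds (G xb θb + S - L₂/2*K - 0)) := tendsto_const_nhds.sub h0
  have hfin := le_of_tendsto hlim (Filter.eventually_atTop.2 ⟨1, fun n hn => key n hn⟩)
  rw [sub_zero] at hfin
  linarith [hfin]

lemma prox_opt (γ : ℝ) (hγ0 : 0 < γ) (g : Euc dy → ℝ) (hg : Differentiable ℝ g)
    (yb θ0 : Euc dy) (hmin : ∀ θ, g θ0 + ‖θ0 - yb‖ ^ 2 / (2 * γ) ≤ g θ + ‖θ - yb‖ ^ 2 / (2 * γ)) :
    gradient g θ0 = γ⁻¹ • (yb - θ0) := by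
  set F : Euc dy → ℝ := fun θ => g θ + ‖θ - yb‖ ^ 2 / (2 * γ) with hF
  have hloc : IsLocalMin F θ0 := Filter.Eventually.of_forall hmin
  have h1 : HasFDerivAt g (InnerProductSpace.toDual ℝ (Euc dy) (gradient g θ0)) θ0 :=
    (hg θ0).hasGradientAt.hasFDerivAt
  have h2 := ((hasFDerivAt_id θ0).sub_const yb).norm_sq
  have h3 := h1.add (h2.const_mul ((2*γ)⁻¹))
  have hFeq : F = fun θ => g θ + (2*γ)⁻¹ * ‖θ - yb‖ ^ 2 := by
    funext θ
    simp only [hF]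
    rw [div_eq_inv_mul]
  rw [hFeq] at hloc
  have h4 := hloc.hasFDerivAt_eq_zero h3
  have h5 : ∀ v : Euc dy, ⟪gradient g θ0, v⟫ + γ⁻¹ * (⟪θ0, v⟫ - ⟪yb, v⟫) = 0 := by
    intro v
    have hv := congrFun (congrArg (fun (L : Euc dy →L[ℝ] ℝ) => (L : Euc dy → ℝ)) h4) v
    simp only [ContinuousLinearMap.add_apply, ContinuousLinearMap.smul_apply,
      ContinuousLinearMap.coe_smul', Pi.smul_apply, ContinuousLinearMap.coe_comp',
      Function.comp_apply, ContinuousLinearMap.coe_id', id_eq, innerSL_apply_apply,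
      ContinuousLinearMap.coe_sub', Pi.sub_apply, nsmul_eq_mul, Nat.cast_ofNat,
      InnerProductSpace.toDual_apply_apply, ContinuousLinearMap.zero_apply, smul_eq_mul] at hv
    have hne : γ ≠ 0 := hγ0.ne'
    have hid : (2*γ)⁻¹ * (2 * (⟪θ0, v⟫ - ⟪yb, v⟫)) = γ⁻¹ * (⟪θ0, v⟫ - ⟪yb, v⟫) := by
      rw [mul_inv]; ring
    rw [show ⟪θ0 - yb, v⟫ = ⟪θ0, v⟫ - ⟪yb, v⟫ from inner_sub_left θ0 yb v] at hv
    linarith [hv, hid.le, hid.ge]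
  apply ext_inner_right ℝ
  intro v
  rw [real_inner_smul_left]
  rw [show ⟪yb - θ0, v⟫ = ⟪yb, v⟫ - ⟪θ0, v⟫ from inner_sub_left yb θ0 v]
  linarith [h5 v]

set_option maxHeartbeats 1000000 in
/-- weak-concavity-type inequality for `−V_γ`. Here `θs` is the proximal solution
map (the unique minimizer of `θ ↦ G(x,θ) + ‖θ − y‖²/(2γ)`), so that
`∇V_γ(x̄,ȳ) = (∇_x G(x̄, θs x̄ ȳ), (ȳ − θs x̄ ȳ)/γ)`. -/
theorem neg_moreau_upper_expansion {dx dy : ℕ} (L₂ γ ρv1 ρv2 : ℝ) (hL₂ : 0 < L₂)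
    (G : Euc dx → Euc dy → ℝ) (hG : LSmooth L₂ G)
    (hγ0 : 0 < γ) (hγ : γ < 1 / (2 * L₂))
    (hρ1 : L₂ ≤ ρv1) (hρ2 : 1 / γ ≤ ρv2)
    (θs : Euc dx → Euc dy → Euc dy)
    (hθs : ∀ x y θ, θ ≠ θs x y →
      G x (θs x y) + ‖θs x y - y‖ ^ 2 / (2 * γ) < G x θ + ‖θ - y‖ ^ 2 / (2 * γ)) :
    ∀ (x xb : Euc dx) (y yb : Euc dy),
      -(moreau G γ x y) ≤
        -(moreau G γ xb yb) -
          (⟪gradx G xb (θs xb yb), x - xb⟫ + ⟪γ⁻¹ • (yb - θs xb yb), y - yb⟫) +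
          ρv1 / 2 * ‖x - xb‖ ^ 2 + ρv2 / 2 * ‖y - yb‖ ^ 2 := by
  intro x xb y yb
  set θ0 := θs xb yb with hθ0
  have hmin : ∀ θ, G xb θ0 + ‖θ0 - yb‖ ^ 2 / (2 * γ) ≤ G xb θ + ‖θ - yb‖ ^ 2 / (2 * γ) := by
    intro θ
    rcases eq_or_ne θ θ0 with rfl | hne
    · exact le_rfl
    · exact (hθs xb yb θ hne).le
  have hVb : moreau G γ xb yb = G xb θ0 + ‖θ0 - yb‖ ^ 2 / (2 * γ) := by
    refine le_antisymm ?_ (le_ciInf hmin)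
    exact ciInf_le ⟨G xb θ0 + ‖θ0 - yb‖ ^ 2 / (2 * γ), by
      rintro _ ⟨θ, rfl⟩; exact hmin θ⟩ θ0
  have hgy : grady G xb θ0 = γ⁻¹ • (yb - θ0) :=
    prox_opt γ hγ0 (fun θ => G xb θ) (hG.2.1 xb) yb θ0 hmin
  -- inverse bound for L₂
  have hinv : (0:ℝ) < γ⁻¹ := by positivity
  have hL2γ : L₂ ≤ γ⁻¹ / 2 := by
    rw [lt_div_iff₀ (by positivity : (0:ℝ) < 2 * L₂)] at hγ
    have hγγ : γ * γ⁻¹ = 1 := mul_inv_cancel₀ hγ0.ne'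
    nlinarith [hγ, hinv]
  have hρ2' : γ⁻¹ ≤ ρv2 := by rw [← one_div]; exact hρ2
  have key : ∀ θ : Euc dy,
      (G xb θ0 + ‖θ0 - yb‖ ^ 2 / (2 * γ)) +
        (⟪gradx G xb θ0, x - xb⟫ + ⟪γ⁻¹ • (yb - θ0), y - yb⟫) -
        ρv1 / 2 * ‖x - xb‖ ^ 2 - ρv2 / 2 * ‖y - yb‖ ^ 2 ≤
      G x θ + ‖θ - y‖ ^ 2 / (2 * γ) := by
    intro θ
    have hjd := joint_descent hG hL₂.le xb x θ0 θ
    rw [hgy] at hjd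
    set b := yb - θ0 with hb
    set u := θ - θ0 with hu2
    set w := y - yb with hw
    have hi1 : ⟪γ⁻¹ • b, u⟫ = γ⁻¹ * ⟪b, u⟫ := real_inner_smul_left _ _ _
    have hi2 : ⟪γ⁻¹ • b, w⟫ = γ⁻¹ * ⟪b, w⟫ := real_inner_smul_left _ _ _
    have hθy : θ - y = u - w - b := by rw [hu2, hw, hb]; abel
    have hnorm : ‖θ - y‖ ^ 2 = ‖u - w‖ ^ 2 - 2 * ⟪u - w, b⟫ + ‖b‖ ^ 2 := by
      rw [hθy]; exact norm_sub_sq_real (u - w) b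
    have hiub : ⟪u - w, b⟫ = ⟪u, b⟫ - ⟪w, b⟫ := inner_sub_left _ _ _
    have hbu : ⟪b, u⟫ = ⟪u, b⟫ := real_inner_comm _ _
    have hbw : ⟪b, w⟫ = ⟪w, b⟫ := real_inner_comm _ _
    have hb0 : ‖θ0 - yb‖ = ‖b‖ := by rw [hb]; exact (norm_sub_rev _ _)
    have he3 : ‖u‖ ^ 2 ≤ 2 * ‖u - w‖ ^ 2 + 2 * ‖w‖ ^ 2 := by
      have h1 : ‖u‖ ≤ ‖u - w‖ + ‖w‖ := by
        calc ‖u‖ = ‖(u - w) + w‖ := by rw [sub_add_cancel]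
          _ ≤ ‖u - w‖ + ‖w‖ := norm_add_le _ _
      have h2 : ‖u‖ ^ 2 ≤ (‖u - w‖ + ‖w‖) ^ 2 := by
        have := pow_le_pow_left₀ (norm_nonneg u) h1 2
        exact this
      nlinarith [h2, sq_nonneg (‖u - w‖ - ‖w‖)]
    -- division rewrites
    have hd1 : ‖θ - y‖ ^ 2 / (2 * γ) =
        γ⁻¹ / 2 * ‖u - w‖ ^ 2 - γ⁻¹ * ⟪u, b⟫ + γ⁻¹ * ⟪w, b⟫ + γ⁻¹ / 2 * ‖b‖ ^ 2 := by
      rw [hnorm, hiub, div_eq_inv_mul, mul_inv]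
      ring
    have hd2 : ‖θ0 - yb‖ ^ 2 / (2 * γ) = γ⁻¹ / 2 * ‖b‖ ^ 2 := by
      rw [hb0, div_eq_inv_mul, mul_inv]
      ring
    rw [hd1, hd2, hi2, hbw]
    rw [hi1, hbu] at hjd
    have hq1 : 0 ≤ (ρv1 - L₂) * ‖x - xb‖ ^ 2 :=
      mul_nonneg (by linarith) (sq_nonneg _)
    have hq2 : 0 ≤ (ρv2 - γ⁻¹) * ‖w‖ ^ 2 := mul_nonneg (by linarith) (sq_nonneg _)
    have hq3 : 0 ≤ (γ⁻¹ / 2 - L₂) * ‖u‖ ^ 2 := mul_nonneg (by linarith) (sq_nonneg _)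
    have hq4 : γ⁻¹ / 4 * ‖u‖ ^ 2 ≤ γ⁻¹ / 4 * (2 * ‖u - w‖ ^ 2 + 2 * ‖w‖ ^ 2) :=
      mul_le_mul_of_nonneg_left he3 (by positivity)
    linarith [hjd, hq1, hq2, hq3, hq4]
  have hle : (G xb θ0 + ‖θ0 - yb‖ ^ 2 / (2 * γ)) +
        (⟪gradx G xb θ0, x - xb⟫ + ⟪γ⁻¹ • (yb - θ0), y - yb⟫) -
        ρv1 / 2 * ‖x - xb‖ ^ 2 - ρv2 / 2 * ‖y - yb‖ ^ 2 ≤ moreau G γ x y :=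
    le_ciInf key
  rw [hVb]
  have hwn : ‖y - yb‖ ^ 2 = ‖y - yb‖ ^ 2 := rfl
  linarith [hle]
end
end

section
/- Let f_i, g_i : ℝ^{d_x} × ℝ^{d_y} → ℝ (i = 1,…,n) be L₁-smooth and L₂-smooth respectively, with L₂ > 0, let F := (1/n)∑_{i=1}^n f_i, G := (1/n)∑_{i=1}^n g_i, let γ ∈ (0, 1/(2L₂)), and let μ ≥ 0. Then for any families (x_i)_{i=1}^n in ℝ^{d_x} and (y_i)_{i=1}^n, (θ_i)_{i=1}^n in ℝ^{d_y} with averages x̄, ȳ, θ̄: ‖ μ∇_y F(x̄,ȳ) + ∇_y G(x̄,ȳ) − (ȳ − θ*_γ(x̄,ȳ))/γ − (1/n) ∑_{i=1}^n ( μ∇_y f_i(x_i,y_i) + ∇_y g_i(x_i,y_i) − (y_i − θ_i)/γ ) ‖² ≤ (2/γ²) ‖θ*_γ(x̄,ȳ) − θ̄‖² + 8(μ²L₁² + L₂²) Δ_x + 8(μ²L₁² + L₂² + 1/γ²) Δ_y + (8/γ²) Δ_θ. -/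
open scoped RealInnerProductSpace

noncomputable section

/-- The average `(1/n) ∑ᵢ vᵢ` of a family of vectors. -/
noncomputable def avg {n : ℕ} {V : Type} [AddCommGroup V] [Module ℝ V] (v : Fin n → V) : V :=
  (n : ℝ)⁻¹ • ∑ i, v i

/-- The mean squared deviation `(1/n) ∑ᵢ ‖vᵢ − v̄‖²` of a family of vectors. -/
noncomputable def devSq {n d : ℕ} (v : Fin n → Euc d) : ℝ :=
  (n : ℝ)⁻¹ * ∑ i, ‖v i - avg v‖ ^ 2

lemma devSq_nonneg' {n d : ℕ} (v : Fin n → Euc d) : 0 ≤ devSq v := by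
  unfold devSq; positivity

lemma norm_add_sq_le_two' {d : ℕ} (a b : Euc d) : ‖a + b‖ ^ 2 ≤ 2 * ‖a‖ ^ 2 + 2 * ‖b‖ ^ 2 := by
  have h := norm_add_le a b
  nlinarith [norm_nonneg a, norm_nonneg b, norm_nonneg (a + b), sq_nonneg (‖a‖ - ‖b‖)]

lemma avg_norm_sq_le' {d n : ℕ} (hn : 0 < n) (v : Fin n → Euc d) :
    ‖(n : ℝ)⁻¹ • ∑ i, v i‖ ^ 2 ≤ (n : ℝ)⁻¹ * ∑ i, ‖v i‖ ^ 2 := by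
  have hn' : (0:ℝ) < n := by exact_mod_cast hn
  have h1 : ‖∑ i, v i‖ ≤ ∑ i, ‖v i‖ := norm_sum_le _ _
  have h2 : (∑ i, ‖v i‖) ^ 2 ≤ (n : ℝ) * ∑ i, ‖v i‖ ^ 2 := by
    have := sq_sum_le_card_mul_sum_sq (s := (Finset.univ : Finset (Fin n)))
      (f := fun i => ‖v i‖)
    simpa using this
  rw [norm_smul, Real.norm_eq_abs, abs_of_pos (by positivity), mul_pow]
  have h3 : ‖∑ i, v i‖ ^ 2 ≤ (n : ℝ) * ∑ i, ‖v i‖ ^ 2 :=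
    le_trans (pow_le_pow_left₀ (norm_nonneg _) h1 2) h2
  calc (n:ℝ)⁻¹ ^ 2 * ‖∑ i, v i‖ ^ 2 ≤ (n:ℝ)⁻¹ ^ 2 * ((n : ℝ) * ∑ i, ‖v i‖ ^ 2) :=
        mul_le_mul_of_nonneg_left h3 (by positivity)
    _ = (n : ℝ)⁻¹ * ∑ i, ‖v i‖ ^ 2 := by field_simp

lemma grady_sq_bound' {dx dy : ℕ} {L : ℝ} {h : Euc dx → Euc dy → ℝ} (hs : LSmooth L h)
    (x x' : Euc dx) (y y' : Euc dy) :
    ‖grady h x y - grady h x' y'‖ ^ 2 ≤ L ^ 2 * (‖x - x'‖ ^ 2 + ‖y - y'‖ ^ 2) := by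
  have h1 := hs.2.2 x y x' y'
  have h2 : ‖grady h x y - grady h x' y'‖ ≤
      pnorm (gradx h x y - gradx h x' y') (grady h x y - grady h x' y') := by
    unfold pnorm
    calc ‖grady h x y - grady h x' y'‖ = Real.sqrt (‖grady h x y - grady h x' y'‖ ^ 2) :=
          (Real.sqrt_sq (norm_nonneg _)).symm
      _ ≤ _ := Real.sqrt_le_sqrt (le_add_of_nonneg_left (sq_nonneg _))
  have h3 : ‖grady h x y - grady h x' y'‖ ≤ L * pnorm (x - x') (y - y') := h2.trans h1
  have h4 : (L * pnorm (x - x') (y - y')) ^ 2 = L ^ 2 * (‖x - x'‖ ^ 2 + ‖y - y'‖ ^ 2) := by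
    rw [mul_pow]; unfold pnorm; rw [Real.sq_sqrt (by positivity)]
  calc ‖grady h x y - grady h x' y'‖ ^ 2 ≤ (L * pnorm (x - x') (y - y')) ^ 2 :=
        pow_le_pow_left₀ (norm_nonneg _) h3 2
    _ = _ := h4

lemma grad_avg_sum' {d n : ℕ} (h : Fin n → Euc d → ℝ) (hd : ∀ i, Differentiable ℝ (h i))
    (y : Euc d) :
    gradient (fun y' => (n : ℝ)⁻¹ * ∑ i, h i y') y = (n : ℝ)⁻¹ • ∑ i, gradient (h i) y := by
  have H : HasGradientAt (fun y' => (n : ℝ)⁻¹ * ∑ i, h i y')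
      ((n : ℝ)⁻¹ • ∑ i, gradient (h i) y) y := by
    rw [hasGradientAt_iff_hasFDerivAt]
    have heq : (InnerProductSpace.toDual ℝ (Euc d)) ((n : ℝ)⁻¹ • ∑ i, gradient (h i) y)
        = (n : ℝ)⁻¹ • ∑ i, (InnerProductSpace.toDual ℝ (Euc d)) (gradient (h i) y) := by
      simp [map_smul, map_sum]
    rw [heq]
    have Hi : ∀ i : Fin n,
        HasFDerivAt (h i) ((InnerProductSpace.toDual ℝ (Euc d)) (gradient (h i) y)) y :=
      fun i => ((hd i y).hasGradientAt).hasFDerivAt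
    exact (HasFDerivAt.fun_sum (fun i _ => Hi i)).const_mul _
  exact H.gradient

lemma key_alg {V : Type} [AddCommGroup V] [Module ℝ V] {n : ℕ} (μ c e : ℝ)
    (A A' B B' y θ : Fin n → V) (Θ : V) :
    μ • (e • ∑ i, A i) + e • ∑ i, B i - c • (e • ∑ i, y i - Θ) -
      e • ∑ i, (μ • A' i + B' i - c • (y i - θ i)) =
    c • (Θ - e • ∑ i, θ i) + e • ∑ i, (μ • (A i - A' i) + (B i - B' i)) := by
  simp only [smul_sub, smul_add, Finset.sum_add_distrib, Finset.sum_sub_distrib,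
    ← Finset.smul_sum]
  module

lemma final_num (c m T Δx Δy Δθ S : ℝ) (hm : 0 ≤ m) (hc : 0 ≤ c) (hx : 0 ≤ Δx)
    (hy : 0 ≤ Δy) (hθ : 0 ≤ Δθ)
    (hS : S ≤ 2 * c * T + 2 * ((2 * m) * (Δx + Δy))) :
    S ≤ 2 * c * T + 8 * m * Δx + 8 * (m + c) * Δy + 8 * c * Δθ := by
  nlinarith [mul_nonneg hm hx, mul_nonneg hm hy, mul_nonneg hc hy, mul_nonneg hc hθ]

/-- bound on the deviation of the averaged `y`-direction from the centralized
direction.  Here `F = (1/n)∑ fᵢ`, `G = (1/n)∑ gᵢ`, `θs` is the proximal solution map of `G`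
(the unique minimizer characterized by `hθs`), `x̄, ȳ, θ̄` are the agent averages and
`Δ_x, Δ_y, Δ_θ` the consensus errors. -/
theorem averaged_y_direction_error_bound {dx dy n : ℕ} (hn : 0 < n) (L₁ L₂ γ μ : ℝ)
    (hL₂ : 0 < L₂) (hγ0 : 0 < γ) (hγ : γ < 1 / (2 * L₂)) (hμ : 0 ≤ μ)
    (f g : Fin n → Euc dx → Euc dy → ℝ)
    (hf : ∀ i, LSmooth L₁ (f i)) (hg : ∀ i, LSmooth L₂ (g i))
    (F G : Euc dx → Euc dy → ℝ)
    (hF : F = fun a b => (n : ℝ)⁻¹ * ∑ i, f i a b)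
    (hG : G = fun a b => (n : ℝ)⁻¹ * ∑ i, g i a b)
    (θs : Euc dx → Euc dy → Euc dy)
    (hθs : ∀ x y θ, θ ≠ θs x y →
      G x (θs x y) + ‖θs x y - y‖ ^ 2 / (2 * γ) < G x θ + ‖θ - y‖ ^ 2 / (2 * γ))
    (xv : Fin n → Euc dx) (yv θv : Fin n → Euc dy) :
    ‖μ • grady F (avg xv) (avg yv) + grady G (avg xv) (avg yv) -
        γ⁻¹ • (avg yv - θs (avg xv) (avg yv)) -
        (n : ℝ)⁻¹ • ∑ i, (μ • grady (f i) (xv i) (yv i) + grady (g i) (xv i) (yv i) -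
          γ⁻¹ • (yv i - θv i))‖ ^ 2 ≤
      2 / γ ^ 2 * ‖θs (avg xv) (avg yv) - avg θv‖ ^ 2 +
        8 * (μ ^ 2 * L₁ ^ 2 + L₂ ^ 2) * devSq xv +
        8 * (μ ^ 2 * L₁ ^ 2 + L₂ ^ 2 + 1 / γ ^ 2) * devSq yv +
        8 / γ ^ 2 * devSq θv := by
  subst hF hG
  set xb := avg xv with hxb
  set yb := avg yv with hyb
  set tb := avg θv with htb
  set Θ := θs xb yb with hΘ
  have hgF : grady (fun a b => (n : ℝ)⁻¹ * ∑ i, f i a b) xb yb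
      = (n : ℝ)⁻¹ • ∑ i, grady (f i) xb yb :=
    grad_avg_sum' (fun i y => f i xb y) (fun i => (hf i).2.1 xb) yb
  have hgG : grady (fun a b => (n : ℝ)⁻¹ * ∑ i, g i a b) xb yb
      = (n : ℝ)⁻¹ • ∑ i, grady (g i) xb yb :=
    grad_avg_sum' (fun i y => g i xb y) (fun i => (hg i).2.1 xb) yb
  set w : Fin n → Euc dy := fun i =>
    μ • (grady (f i) xb yb - grady (f i) (xv i) (yv i)) +
      (grady (g i) xb yb - grady (g i) (xv i) (yv i)) with hw
  have key : μ • grady (fun a b => (n : ℝ)⁻¹ * ∑ i, f i a b) xb yb +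
      grady (fun a b => (n : ℝ)⁻¹ * ∑ i, g i a b) xb yb - γ⁻¹ • (yb - Θ) -
      (n : ℝ)⁻¹ • ∑ i, (μ • grady (f i) (xv i) (yv i) + grady (g i) (xv i) (yv i) -
        γ⁻¹ • (yv i - θv i))
      = γ⁻¹ • (Θ - tb) + (n : ℝ)⁻¹ • ∑ i, w i := by
    have hy : yb = (n : ℝ)⁻¹ • ∑ i, yv i := rfl
    have ht : tb = (n : ℝ)⁻¹ • ∑ i, θv i := rfl
    rw [hgF, hgG]
    simp only [hw]
    rw [hy, ht]
    exact key_alg μ γ⁻¹ (n : ℝ)⁻¹ (fun i => grady (f i) xb yb)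
      (fun i => grady (f i) (xv i) (yv i)) (fun i => grady (g i) xb yb)
      (fun i => grady (g i) (xv i) (yv i)) yv θv Θ
  rw [key]
  have h1 : ‖γ⁻¹ • (Θ - tb) + (n : ℝ)⁻¹ • ∑ i, w i‖ ^ 2 ≤
      2 * ‖γ⁻¹ • (Θ - tb)‖ ^ 2 + 2 * ‖(n : ℝ)⁻¹ • ∑ i, w i‖ ^ 2 := norm_add_sq_le_two' _ _
  have h2 : ‖γ⁻¹ • (Θ - tb)‖ ^ 2 = γ⁻¹ ^ 2 * ‖Θ - tb‖ ^ 2 := by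
    rw [norm_smul, mul_pow, Real.norm_eq_abs, sq_abs]
  have h3 : ‖(n : ℝ)⁻¹ • ∑ i, w i‖ ^ 2 ≤ (n : ℝ)⁻¹ * ∑ i, ‖w i‖ ^ 2 := avg_norm_sq_le' hn w
  have h4 : ∀ i, ‖w i‖ ^ 2 ≤
      (2 * μ ^ 2 * L₁ ^ 2 + 2 * L₂ ^ 2) * (‖xv i - xb‖ ^ 2 + ‖yv i - yb‖ ^ 2) := by
    intro i
    have ha := grady_sq_bound' (hf i) xb (xv i) yb (yv i)
    have hb := grady_sq_bound' (hg i) xb (xv i) yb (yv i)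
    have hc := norm_add_sq_le_two' (μ • (grady (f i) xb yb - grady (f i) (xv i) (yv i)))
      (grady (g i) xb yb - grady (g i) (xv i) (yv i))
    have hd : ‖μ • (grady (f i) xb yb - grady (f i) (xv i) (yv i))‖ ^ 2
        = μ ^ 2 * ‖grady (f i) xb yb - grady (f i) (xv i) (yv i)‖ ^ 2 := by
      rw [norm_smul, mul_pow, Real.norm_eq_abs, sq_abs]
    have hrx : ‖xb - xv i‖ = ‖xv i - xb‖ := norm_sub_rev _ _
    have hry : ‖yb - yv i‖ = ‖yv i - yb‖ := norm_sub_rev _ _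
    rw [hrx, hry] at ha hb
    have ha' := mul_le_mul_of_nonneg_left ha (by positivity : (0:ℝ) ≤ μ ^ 2)
    simp only [hw]
    linarith [hc, hd.le, hd.ge, hb, ha']
  have h5 : (n : ℝ)⁻¹ * ∑ i, ‖w i‖ ^ 2 ≤
      (2 * μ ^ 2 * L₁ ^ 2 + 2 * L₂ ^ 2) * (devSq xv + devSq yv) := by
    have hsum : ∑ i, ‖w i‖ ^ 2 ≤ (2 * μ ^ 2 * L₁ ^ 2 + 2 * L₂ ^ 2) *
        (∑ i, ‖xv i - xb‖ ^ 2 + ∑ i, ‖yv i - yb‖ ^ 2) :=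
      calc ∑ i, ‖w i‖ ^ 2
          ≤ ∑ i, (2 * μ ^ 2 * L₁ ^ 2 + 2 * L₂ ^ 2) * (‖xv i - xb‖ ^ 2 + ‖yv i - yb‖ ^ 2) :=
            Finset.sum_le_sum fun i _ => h4 i
        _ = _ := by rw [← Finset.mul_sum, Finset.sum_add_distrib]
    calc (n : ℝ)⁻¹ * ∑ i, ‖w i‖ ^ 2
        ≤ (n : ℝ)⁻¹ * ((2 * μ ^ 2 * L₁ ^ 2 + 2 * L₂ ^ 2) *
            (∑ i, ‖xv i - xb‖ ^ 2 + ∑ i, ‖yv i - yb‖ ^ 2)) :=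
          mul_le_mul_of_nonneg_left hsum (by positivity)
      _ = (2 * μ ^ 2 * L₁ ^ 2 + 2 * L₂ ^ 2) * (devSq xv + devSq yv) := by
          unfold devSq; rw [← hxb, ← hyb]; ring
  have hS : ‖γ⁻¹ • (Θ - tb) + (n : ℝ)⁻¹ • ∑ i, w i‖ ^ 2 ≤
      2 * γ⁻¹ ^ 2 * ‖Θ - tb‖ ^ 2 +
        2 * (2 * (μ ^ 2 * L₁ ^ 2 + L₂ ^ 2) * (devSq xv + devSq yv)) := by
    linarith [h1, h2.le, h2.ge, h3, h5]
  calc ‖γ⁻¹ • (Θ - tb) + (n : ℝ)⁻¹ • ∑ i, w i‖ ^ 2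
      ≤ 2 * γ⁻¹ ^ 2 * ‖Θ - tb‖ ^ 2 + 8 * (μ ^ 2 * L₁ ^ 2 + L₂ ^ 2) * devSq xv +
          8 * (μ ^ 2 * L₁ ^ 2 + L₂ ^ 2 + γ⁻¹ ^ 2) * devSq yv + 8 * γ⁻¹ ^ 2 * devSq θv :=
        final_num (γ⁻¹ ^ 2) (μ ^ 2 * L₁ ^ 2 + L₂ ^ 2) (‖Θ - tb‖ ^ 2) (devSq xv)
          (devSq yv) (devSq θv) _ (by positivity) (by positivity) (devSq_nonneg' xv)
          (devSq_nonneg' yv) (devSq_nonneg' θv) hS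
    _ = 2 / γ ^ 2 * ‖Θ - tb‖ ^ 2 + 8 * (μ ^ 2 * L₁ ^ 2 + L₂ ^ 2) * devSq xv +
          8 * (μ ^ 2 * L₁ ^ 2 + L₂ ^ 2 + 1 / γ ^ 2) * devSq yv +
          8 / γ ^ 2 * devSq θv := by ring
end
end

section
/- Let g_i : ℝ^{d_x} × ℝ^{d_y} → ℝ (i = 1,…,n) be L₂-smooth with L₂ > 0, let G := (1/n)∑_{i=1}^n g_i, let γ ∈ (0, 1/(2L₂)), and set η := 1/γ − L₂ > 0. Then for any families (x_i)_{i=1}^n in ℝ^{d_x} and (y_i)_{i=1}^n, (θ_i)_{i=1}^n in ℝ^{d_y} with averages x̄, ȳ, θ̄: −⟨ θ̄ − θ*_γ(x̄,ȳ), (1/n) ∑_{i=1}^n ( ∇_y g_i(x_i,θ_i) + (θ_i − y_i)/γ ) ⟩ ≤ (3/η) L₂² Δ_x + (3/η)(1/γ²) Δ_y + (3/η)(L₂² + 1/γ²) Δ_θ − (η/2) ‖θ̄ − θ*_γ(x̄,ȳ)‖². -/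
open scoped RealInnerProductSpace

noncomputable section

lemma hasGradientAt_add' {d : ℕ} {f g : Euc d → ℝ} {f' g' x : Euc d}
    (hf : HasGradientAt f f' x) (hg : HasGradientAt g g' x) :
    HasGradientAt (fun y => f y + g y) (f' + g') x := by
  rw [hasGradientAt_iff_hasFDerivAt] at *
  simpa [map_add] using hf.fun_add hg

lemma hasGradientAt_const_mul' {d : ℕ} {f : Euc d → ℝ} {f' x : Euc d} (c : ℝ)
    (hf : HasGradientAt f f' x) :
    HasGradientAt (fun y => c * f y) (c • f') x := by
  rw [hasGradientAt_iff_hasFDerivAt] at *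
  have h := hf.const_mul c
  convert h using 1
  · rfl
  ext v
  simp [InnerProductSpace.toDual_apply_apply, real_inner_smul_left]

lemma hasGradientAt_sum' {d m : ℕ} (f : Fin m → Euc d → ℝ) (f' : Fin m → Euc d) (x : Euc d)
    (hf : ∀ i, HasGradientAt (f i) (f' i) x) :
    HasGradientAt (fun y => ∑ i, f i y) (∑ i, f' i) x := by
  rw [hasGradientAt_iff_hasFDerivAt]
  have h := HasFDerivAt.fun_sum (fun i (_ : i ∈ Finset.univ) =>
    hasGradientAt_iff_hasFDerivAt.mp (hf i))
  simpa [map_sum] using h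

lemma hasGradientAt_quad {d : ℕ} (γ : ℝ) (c θ : Euc d) :
    HasGradientAt (fun θ' => ‖θ' - c‖ ^ 2 / (2 * γ)) (γ⁻¹ • (θ - c)) θ := by
  rw [hasGradientAt_iff_hasFDerivAt]
  have h1 : HasFDerivAt (fun θ' : Euc d => θ' - c) (ContinuousLinearMap.id ℝ (Euc d)) θ :=
    (hasFDerivAt_id θ).sub_const c
  have h2 := (h1.inner ℝ h1).const_mul (2 * γ)⁻¹
  have heq : (fun θ' : Euc d => ‖θ' - c‖ ^ 2 / (2 * γ))
      = fun θ' => (2 * γ)⁻¹ * ⟪θ' - c, θ' - c⟫ := by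
    ext θ'
    rw [real_inner_self_eq_norm_sq]
    ring
  rw [heq]
  convert h2 using 1
  · rfl
  ext v
  simp only [ContinuousLinearMap.coe_smul', Pi.smul_apply, ContinuousLinearMap.coe_comp',
    Function.comp_apply, ContinuousLinearMap.prod_apply, ContinuousLinearMap.coe_id', id_eq,
    fderivInnerCLM_apply, InnerProductSpace.toDual_apply_apply, real_inner_smul_left, smul_eq_mul,
    real_inner_comm v (θ - c)]
  ring


set_option maxHeartbeats 1000000 in
/-- descent inner-product bound for the averaged `θ`-direction.  Here
`G = (1/n)∑ gᵢ`, `θs` is the proximal solution map of `G` (the unique minimizer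
characterized by `hθs`), `η = 1/γ − L₂ > 0`, `x̄, ȳ, θ̄` are the agent averages and
`Δ_x, Δ_y, Δ_θ` the consensus errors. -/
theorem theta_direction_inner_product_bound {dx dy n : ℕ} (hn : 0 < n) (L₂ γ η : ℝ)
    (hL₂ : 0 < L₂) (hγ0 : 0 < γ) (hγ : γ < 1 / (2 * L₂))
    (hη : η = 1 / γ - L₂) (hη0 : 0 < η)
    (g : Fin n → Euc dx → Euc dy → ℝ)
    (hg : ∀ i, LSmooth L₂ (g i))
    (G : Euc dx → Euc dy → ℝ)
    (hG : G = fun a b => (n : ℝ)⁻¹ * ∑ i, g i a b)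
    (θs : Euc dx → Euc dy → Euc dy)
    (hθs : ∀ x y θ, θ ≠ θs x y →
      G x (θs x y) + ‖θs x y - y‖ ^ 2 / (2 * γ) < G x θ + ‖θ - y‖ ^ 2 / (2 * γ))
    (xv : Fin n → Euc dx) (yv θv : Fin n → Euc dy) :
    -⟪avg θv - θs (avg xv) (avg yv),
        (n : ℝ)⁻¹ • ∑ i, (grady (g i) (xv i) (θv i) + γ⁻¹ • (θv i - yv i))⟫ ≤
      3 / η * L₂ ^ 2 * devSq xv + 3 / η * (1 / γ ^ 2) * devSq yv +
        3 / η * (L₂ ^ 2 + 1 / γ ^ 2) * devSq θv -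
        η / 2 * ‖avg θv - θs (avg xv) (avg yv)‖ ^ 2 := by
  have hn' : (n : ℝ) ≠ 0 := Nat.cast_ne_zero.mpr hn.ne'
  have hn0 : (0 : ℝ) < n := Nat.cast_pos.mpr hn
  have hγ' : γ ≠ 0 := hγ0.ne'
  set xb := avg xv with hxb
  set yb := avg yv with hyb
  set tb := avg θv with htb
  set p := θs xb yb with hp
  set A := tb - p with hA
  set v := (n : ℝ)⁻¹ • ∑ i, (grady (g i) (xv i) (θv i) + γ⁻¹ • (θv i - yv i)) with hv
  -- differentiability of G in second variable
  have hdiffG : ∀ x, Differentiable ℝ (fun θ => G x θ) := by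
    intro x
    rw [hG]
    exact (Differentiable.fun_sum fun i _ => (hg i).2.1 x).const_mul _
  -- gradient of G is the average of gradients
  have hgradG : ∀ x θ, grady G x θ = (n : ℝ)⁻¹ • ∑ i, grady (g i) x θ := by
    intro x θ
    have h : HasGradientAt (fun θ' => G x θ')
        ((n : ℝ)⁻¹ • ∑ i, grady (g i) x θ) θ := by
      rw [hG]
      exact hasGradientAt_const_mul' (n : ℝ)⁻¹
        (hasGradientAt_sum' (fun i θ' => g i x θ') (fun i => grady (g i) x θ) θ
          (fun i => ((hg i).2.1 x θ).hasGradientAt))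
    exact h.gradient
  -- gradient of the prox objective
  have hF : ∀ θ, HasGradientAt (fun θ' => G xb θ' + ‖θ' - yb‖ ^ 2 / (2 * γ))
      (grady G xb θ + γ⁻¹ • (θ - yb)) θ := fun θ =>
    hasGradientAt_add' ((hdiffG xb θ).hasGradientAt) (hasGradientAt_quad γ yb θ)
  -- first-order optimality at p
  have hmin : grady G xb p + γ⁻¹ • (p - yb) = 0 := by
    have hlocal : IsLocalMin (fun θ' => G xb θ' + ‖θ' - yb‖ ^ 2 / (2 * γ)) p := by
      apply Filter.Eventually.of_forall
      intro θ
      by_cases h : θ = p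
      · simp [h]
      · exact (hθs xb yb θ h).le
    have h0 : fderiv ℝ (fun θ' => G xb θ' + ‖θ' - yb‖ ^ 2 / (2 * γ)) p = 0 :=
      hlocal.fderiv_eq_zero
    have h1 : gradient (fun θ' => G xb θ' + ‖θ' - yb‖ ^ 2 / (2 * γ)) p = 0 := by
      unfold gradient
      rw [h0, map_zero]
    rw [← (hF p).gradient, h1]
  -- pnorm facts
  have hpn1 : ∀ (a : Euc dx) (b : Euc dy), ‖b‖ ≤ pnorm a b := by
    intro a b
    rw [pnorm]
    nth_rewrite 1 [show ‖b‖ = Real.sqrt (‖b‖ ^ 2) from (Real.sqrt_sq (norm_nonneg b)).symm]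
    exact Real.sqrt_le_sqrt (by nlinarith [sq_nonneg ‖a‖])
  have hpn2 : ∀ (a : Euc dx) (b : Euc dy), pnorm a b ^ 2 = ‖a‖ ^ 2 + ‖b‖ ^ 2 := by
    intro a b
    rw [pnorm, Real.sq_sqrt (by positivity)]
  have lipsq : ∀ i (x x' : Euc dx) (y y' : Euc dy),
      ‖grady (g i) x y - grady (g i) x' y'‖ ^ 2 ≤ L₂ ^ 2 * (‖x - x'‖ ^ 2 + ‖y - y'‖ ^ 2) := by
    intro i x x' y y'
    have h := (hg i).2.2 x y x' y'
    have h2 : ‖grady (g i) x y - grady (g i) x' y'‖ ≤ L₂ * pnorm (x - x') (y - y') :=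
      le_trans (hpn1 _ _) h
    have h3 : (0:ℝ) ≤ pnorm (x - x') (y - y') := Real.sqrt_nonneg _
    nlinarith [hpn2 (x - x') (y - y'), norm_nonneg (grady (g i) x y - grady (g i) x' y')]
  have lipy : ∀ i (x : Euc dx) (y y' : Euc dy),
      ‖grady (g i) x y - grady (g i) x y'‖ ≤ L₂ * ‖y - y'‖ := by
    intro i x y y'
    have h := (hg i).2.2 x y x y'
    have he : pnorm (x - x) (y - y') = ‖y - y'‖ := by
      rw [pnorm]
      simp [Real.sqrt_sq (norm_nonneg (y - y'))]
    rw [he] at h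
    exact le_trans (hpn1 _ _) h
  have lipG : ‖grady G xb tb - grady G xb p‖ ≤ L₂ * ‖A‖ := by
    rw [hgradG, hgradG, ← smul_sub, ← Finset.sum_sub_distrib]
    calc ‖(n : ℝ)⁻¹ • ∑ i, (grady (g i) xb tb - grady (g i) xb p)‖
        ≤ (n : ℝ)⁻¹ * ∑ i, ‖grady (g i) xb tb - grady (g i) xb p‖ := by
          rw [norm_smul, Real.norm_eq_abs, abs_of_nonneg (by positivity)]
          gcongr
          exact norm_sum_le _ _
      _ ≤ (n : ℝ)⁻¹ * ∑ _i : Fin n, L₂ * ‖tb - p‖ := by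
          gcongr with i
          exact lipy i _ _ _
      _ = L₂ * ‖A‖ := by
          rw [Finset.sum_const, Finset.card_univ, Fintype.card_fin, nsmul_eq_mul, hA]
          field_simp
  -- w := gradient of prox objective at tb
  set w := grady G xb tb + γ⁻¹ • (tb - yb) with hw0
  have stepA : η * ‖A‖ ^ 2 ≤ ⟪A, w⟫ := by
    have h2 : γ⁻¹ • (p - yb) = -grady G xb p := eq_neg_of_add_eq_zero_right hmin
    have hw : w = (grady G xb tb - grady G xb p) + γ⁻¹ • A := by
      rw [hw0, hA]
      calc grady G xb tb + γ⁻¹ • (tb - yb)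
          = grady G xb tb + γ⁻¹ • ((tb - p) + (p - yb)) := by rw [sub_add_sub_cancel]
        _ = grady G xb tb + (γ⁻¹ • (tb - p) + γ⁻¹ • (p - yb)) := by rw [smul_add]
        _ = grady G xb tb + (γ⁻¹ • (tb - p) + -grady G xb p) := by rw [h2]
        _ = (grady G xb tb - grady G xb p) + γ⁻¹ • (tb - p) := by abel
    rw [hw, inner_add_right, real_inner_smul_right, real_inner_self_eq_norm_sq]
    have h1 : -(L₂ * ‖A‖ ^ 2) ≤ ⟪A, grady G xb tb - grady G xb p⟫ := by
      have hcs := abs_real_inner_le_norm A (grady G xb tb - grady G xb p)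
      have := neg_abs_le ⟪A, grady G xb tb - grady G xb p⟫
      nlinarith [norm_nonneg A, norm_nonneg (grady G xb tb - grady G xb p)]
    have hγinv : η = γ⁻¹ - L₂ := by rw [hη, one_div]
    nlinarith [sq_nonneg ‖A‖]
  -- per-agent deviation vectors
  set d := fun i => (grady (g i) xb tb - grady (g i) (xv i) (θv i))
      + γ⁻¹ • ((tb - θv i) - (yb - yv i)) with hd
  have hwv : w - v = (n : ℝ)⁻¹ • ∑ i, d i := by
    have hconst : γ⁻¹ • (tb - yb) = (n : ℝ)⁻¹ • ∑ _i : Fin n, γ⁻¹ • (tb - yb) := by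
      rw [Finset.sum_const, Finset.card_univ, Fintype.card_fin,
        ← Nat.cast_smul_eq_nsmul ℝ, smul_smul, inv_mul_cancel₀ hn', one_smul]
    have hGsum : grady G xb tb = (n : ℝ)⁻¹ • ∑ i, grady (g i) xb tb := hgradG xb tb
    rw [hw0, hv, hGsum, hconst, ← smul_add, ← smul_sub, ← Finset.sum_add_distrib,
      ← Finset.sum_sub_distrib]
    congr 1
    apply Finset.sum_congr rfl
    intro i _
    simp only [hd, smul_sub]
    abel
  have hwvsq : ‖w - v‖ ^ 2 ≤ (n : ℝ)⁻¹ * ∑ i, ‖d i‖ ^ 2 := by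
    have h1 : ‖w - v‖ ≤ (n : ℝ)⁻¹ * ∑ i, ‖d i‖ := by
      rw [hwv, norm_smul, Real.norm_eq_abs, abs_of_nonneg (by positivity)]
      gcongr
      exact norm_sum_le _ _
    have h2 : (∑ i, ‖d i‖) ^ 2 ≤ (n : ℝ) * ∑ i, ‖d i‖ ^ 2 := by
      have := sq_sum_le_card_mul_sum_sq (s := (Finset.univ : Finset (Fin n)))
        (f := fun i => ‖d i‖)
      simpa using this
    calc ‖w - v‖ ^ 2 ≤ ((n : ℝ)⁻¹ * ∑ i, ‖d i‖) ^ 2 := by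
          have := norm_nonneg (w - v)
          nlinarith
      _ = (n : ℝ)⁻¹ ^ 2 * (∑ i, ‖d i‖) ^ 2 := by ring
      _ ≤ (n : ℝ)⁻¹ ^ 2 * ((n : ℝ) * ∑ i, ‖d i‖ ^ 2) := by
          gcongr
      _ = (n : ℝ)⁻¹ * ∑ i, ‖d i‖ ^ 2 := by field_simp
  have hdsq : ∀ i, ‖d i‖ ^ 2 ≤ 3 * L₂ ^ 2 * ‖xv i - xb‖ ^ 2
      + 3 * (1 / γ ^ 2) * ‖yv i - yb‖ ^ 2
      + 3 * (L₂ ^ 2 + 1 / γ ^ 2) * ‖θv i - tb‖ ^ 2 := by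
    intro i
    have h1 : ‖d i‖ ≤ ‖grady (g i) xb tb - grady (g i) (xv i) (θv i)‖
        + (γ⁻¹ * ‖tb - θv i‖ + γ⁻¹ * ‖yb - yv i‖) := by
      rw [hd]
      refine le_trans (norm_add_le _ _) ?_
      gcongr
      rw [norm_smul, Real.norm_eq_abs, abs_of_nonneg (by positivity), ← mul_add]
      gcongr
      exact norm_sub_le _ _
    have h2 := lipsq i xb (xv i) tb (θv i)
    rw [norm_sub_rev tb (θv i)] at h1
    rw [norm_sub_rev yb (yv i)] at h1
    rw [norm_sub_rev xb (xv i), norm_sub_rev tb (θv i)] at h2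
    have hg0 := norm_nonneg (grady (g i) xb tb - grady (g i) (xv i) (θv i))
    have hd0 := norm_nonneg (d i)
    have ht0 := norm_nonneg (θv i - tb)
    have hy0 := norm_nonneg (yv i - yb)
    have hx0 := norm_nonneg (xv i - xb)
    have hγe : γ⁻¹ ^ 2 = 1 / γ ^ 2 := by field_simp
    nlinarith [sq_nonneg (‖grady (g i) xb tb - grady (g i) (xv i) (θv i)‖ - γ⁻¹ * ‖θv i - tb‖),
      sq_nonneg (‖grady (g i) xb tb - grady (g i) (xv i) (θv i)‖ - γ⁻¹ * ‖yv i - yb‖),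
      sq_nonneg (γ⁻¹ * ‖θv i - tb‖ - γ⁻¹ * ‖yv i - yb‖), sq_nonneg γ⁻¹,
      mul_nonneg (mul_nonneg (inv_pos.mpr hγ0).le ht0) (mul_nonneg (inv_pos.mpr hγ0).le hy0)]
  have hDx : devSq xv = (n : ℝ)⁻¹ * ∑ i, ‖xv i - xb‖ ^ 2 := by rw [devSq, hxb]
  have hDy : devSq yv = (n : ℝ)⁻¹ * ∑ i, ‖yv i - yb‖ ^ 2 := by rw [devSq, hyb]
  have hDθ : devSq θv = (n : ℝ)⁻¹ * ∑ i, ‖θv i - tb‖ ^ 2 := by rw [devSq, htb]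
  have hsum : ‖w - v‖ ^ 2 ≤ 3 * L₂ ^ 2 * devSq xv + 3 * (1 / γ ^ 2) * devSq yv
      + 3 * (L₂ ^ 2 + 1 / γ ^ 2) * devSq θv := by
    refine le_trans hwvsq ?_
    rw [hDx, hDy, hDθ]
    have h := Finset.sum_le_sum (fun i (_ : i ∈ Finset.univ) => hdsq i)
    rw [Finset.sum_add_distrib, Finset.sum_add_distrib, ← Finset.mul_sum, ← Finset.mul_sum,
      ← Finset.mul_sum] at h
    have h2 : (n : ℝ)⁻¹ * ∑ i, ‖d i‖ ^ 2 ≤ (n : ℝ)⁻¹ *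
        (3 * L₂ ^ 2 * ∑ i, ‖xv i - xb‖ ^ 2 + 3 * (1 / γ ^ 2) * ∑ i, ‖yv i - yb‖ ^ 2
          + 3 * (L₂ ^ 2 + 1 / γ ^ 2) * ∑ i, ‖θv i - tb‖ ^ 2) := by
      gcongr
    refine le_trans h2 (le_of_eq ?_)
    ring
  -- devSq nonnegativity
  have hDx0 : 0 ≤ devSq xv := by rw [hDx]; positivity
  have hDy0 : 0 ≤ devSq yv := by rw [hDy]; positivity
  have hDθ0 : 0 ≤ devSq θv := by rw [hDθ]; positivity
  -- Young's inequality step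
  have young : -⟪A, v⟫ ≤ -(η * ‖A‖ ^ 2) + (η / 2 * ‖A‖ ^ 2 + 1 / (2 * η) * ‖w - v‖ ^ 2) := by
    have h1 : ⟪A, v⟫ = ⟪A, w⟫ - ⟪A, w - v⟫ := by
      rw [inner_sub_right]; ring
    have h2 : ⟪A, w - v⟫ ≤ ‖A‖ * ‖w - v‖ := real_inner_le_norm _ _
    have h3 : ‖A‖ * ‖w - v‖ ≤ η / 2 * ‖A‖ ^ 2 + 1 / (2 * η) * ‖w - v‖ ^ 2 := by
      have hkey : (0:ℝ) ≤ (η * ‖A‖ - ‖w - v‖) ^ 2 := sq_nonneg _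
      have hexp : η / 2 * ‖A‖ ^ 2 + 1 / (2 * η) * ‖w - v‖ ^ 2 - ‖A‖ * ‖w - v‖
          = (η * ‖A‖ - ‖w - v‖) ^ 2 / (2 * η) := by
        field_simp
        ring
      have hq := div_nonneg hkey (by positivity : (0:ℝ) ≤ 2 * η)
      linarith [hexp ▸ hq]
    linarith [stepA]
  have hL2sq : (0:ℝ) ≤ L₂ ^ 2 := sq_nonneg _
  have hγsq : (0:ℝ) < 1 / γ ^ 2 := by positivity
  have hfin : 1 / (2 * η) * ‖w - v‖ ^ 2 ≤ 3 / η * L₂ ^ 2 * devSq xv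
      + 3 / η * (1 / γ ^ 2) * devSq yv + 3 / η * (L₂ ^ 2 + 1 / γ ^ 2) * devSq θv := by
    have h1 : 1 / (2 * η) * ‖w - v‖ ^ 2 ≤ 1 / (2 * η) *
        (3 * L₂ ^ 2 * devSq xv + 3 * (1 / γ ^ 2) * devSq yv
          + 3 * (L₂ ^ 2 + 1 / γ ^ 2) * devSq θv) := by
      gcongr
    refine le_trans h1 ?_
    have e1 : 1 / (2 * η) * (3 * L₂ ^ 2 * devSq xv) ≤ 3 / η * L₂ ^ 2 * devSq xv := by
      rw [show (1:ℝ) / (2 * η) * (3 * L₂ ^ 2 * devSq xv)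
          = 3 * L₂ ^ 2 * devSq xv / (2 * η) by ring,
        show (3:ℝ) / η * L₂ ^ 2 * devSq xv = 3 * L₂ ^ 2 * devSq xv / η by ring]
      gcongr
      all_goals first | positivity | linarith
    have e2 : 1 / (2 * η) * (3 * (1 / γ ^ 2) * devSq yv)
        ≤ 3 / η * (1 / γ ^ 2) * devSq yv := by
      rw [show (1:ℝ) / (2 * η) * (3 * (1 / γ ^ 2) * devSq yv)
          = 3 * (1 / γ ^ 2) * devSq yv / (2 * η) by ring,
        show (3:ℝ) / η * (1 / γ ^ 2) * devSq yv = 3 * (1 / γ ^ 2) * devSq yv / η by ring]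
      gcongr
      all_goals first | positivity | linarith
    have e3 : 1 / (2 * η) * (3 * (L₂ ^ 2 + 1 / γ ^ 2) * devSq θv)
        ≤ 3 / η * (L₂ ^ 2 + 1 / γ ^ 2) * devSq θv := by
      rw [show (1:ℝ) / (2 * η) * (3 * (L₂ ^ 2 + 1 / γ ^ 2) * devSq θv)
          = 3 * (L₂ ^ 2 + 1 / γ ^ 2) * devSq θv / (2 * η) by ring,
        show (3:ℝ) / η * (L₂ ^ 2 + 1 / γ ^ 2) * devSq θv
          = 3 * (L₂ ^ 2 + 1 / γ ^ 2) * devSq θv / η by ring]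
      gcongr
      all_goals first | positivity | linarith
    linarith [mul_le_mul_of_nonneg_left hsum (le_of_lt (by positivity : (0:ℝ) < 1 / (2 * η)))]
  have hwv2 : 1 / (2 * η) * ‖w - v‖ ^ 2 ≤ 3 / η * L₂ ^ 2 * devSq xv
      + 3 / η * (1 / γ ^ 2) * devSq yv + 3 / η * (L₂ ^ 2 + 1 / γ ^ 2) * devSq θv := hfin
  linarith [young, hwv2]
end
end
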